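/- Let V̄ be the cuspidal-type sl_2(ℂ)-module built from commuting operators P, Q on a finite-dimensional space V, and let ℂ^2 be the natural 2-dimensional sl_2-module. Then the operator (c - (P+Q+2·Id)^2)(c - (P+Q)^2), where c is the Casimir (h+1)^2 + 4fe acting on ℂ^2 ⊗ V̄ and P+Q is extended diagonally, annihilates ℂ^2 ⊗ V̄. -/

import Mathlib

open LieAlgebra.SpecialLinear

/-- the standard basis element `e` of `sl₂(ℂ)`. -/
noncomputable def sl2E : sl (Fin 2) ℂ := single (0 : Fin 2) 1 (by decide) (1 : ℂ)

/-- the standard basis element `f` of `sl₂(ℂ)`. -/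
noncomputable def sl2F : sl (Fin 2) ℂ := single (1 : Fin 2) 0 (by decide) (1 : ℂ)

/-- the standard basis element `h` of `sl₂(ℂ)`. -/
noncomputable def sl2H : sl (Fin 2) ℂ :=
  ⟨Matrix.single 0 0 1 - Matrix.single 1 1 1, by
    show _ ∈ LinearMap.ker (Matrix.traceLinearMap (Fin 2) ℂ ℂ)
    rw [LinearMap.mem_ker]
    simp [Matrix.trace, Matrix.diag, Matrix.single, Fin.sum_univ_two]⟩

open TensorProduct

attribute [local instance 100] LieRing.ofAssociativeRing

lemma matE (x : Fin 2 → ℂ) :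
    Matrix.toLin' ((sl2E : sl (Fin 2) ℂ) : Matrix (Fin 2) (Fin 2) ℂ) x = x 1 • (Pi.single 0 1 : Fin 2 → ℂ) := by
  funext j; fin_cases j <;>
    simp [sl2E, Matrix.toLin'_apply, Matrix.mulVec, dotProduct, Fin.sum_univ_two,
      Matrix.single, val_single]
lemma matF (x : Fin 2 → ℂ) :
    Matrix.toLin' ((sl2F : sl (Fin 2) ℂ) : Matrix (Fin 2) (Fin 2) ℂ) x = x 0 • (Pi.single 1 1 : Fin 2 → ℂ) := by
  funext j; fin_cases j <;>
    simp [sl2F, Matrix.toLin'_apply, Matrix.mulVec, dotProduct, Fin.sum_univ_two,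
      Matrix.single, val_single]
lemma matH (x : Fin 2 → ℂ) :
    Matrix.toLin' ((sl2H : sl (Fin 2) ℂ) : Matrix (Fin 2) (Fin 2) ℂ) x
      = x 0 • (Pi.single 0 1 : Fin 2 → ℂ) - x 1 • (Pi.single 1 1 : Fin 2 → ℂ) := by
  funext j; fin_cases j <;>
    simp [sl2H, Matrix.toLin'_apply, Matrix.mulVec, dotProduct, Fin.sum_univ_two,
      Matrix.single, val_single]

set_option maxHeartbeats 2000000 in
/-- Let `V̄ = ⊕_{i∈ℤ} V⁽ⁱ⁾` be the cuspidal-type sl₂(ℂ)-module built from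
commuting operators `P`, `Q`, and let `ℂ²` be the natural 2-dimensional sl₂-module. Then the
operator `(c - (P+Q+2)²)(c - (P+Q)²)` annihilates `ℂ² ⊗ V̄`, where `c = (h+1)² + 4fe` is the
Casimir acting on the tensor product and `P+Q` is extended diagonally. -/
theorem stmt6 (V : Type*) [AddCommGroup V] [Module ℂ V] [FiniteDimensional ℂ V]
    (P Q : Module.End ℂ V) (hPQ : Commute P Q)
    (π : sl (Fin 2) ℂ →ₗ⁅ℂ⁆ Module.End ℂ (ℤ →₀ V))
    (hE : ∀ (i : ℤ) (v : V),
      π sl2E (Finsupp.single i v) = Finsupp.single (i + 1) ((P - (i : ℂ) • 1) v))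
    (hF : ∀ (i : ℤ) (v : V),
      π sl2F (Finsupp.single i v) = Finsupp.single (i - 1) ((Q + (i : ℂ) • 1) v))
    (hH : ∀ (i : ℤ) (v : V),
      π sl2H (Finsupp.single i v) = Finsupp.single i ((Q - P + (2 * i : ℂ) • 1) v))
    -- the action of sl₂ on the tensor product ℂ² ⊗ V̄ :
    (ρ : sl (Fin 2) ℂ → Module.End ℂ ((Fin 2 → ℂ) ⊗[ℂ] (ℤ →₀ V)))
    (hρ : ∀ x : sl (Fin 2) ℂ,
      ρ x = LinearMap.rTensor (ℤ →₀ V) (Matrix.toLin' (x : Matrix (Fin 2) (Fin 2) ℂ))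
        + LinearMap.lTensor (Fin 2 → ℂ) (π x)) :
    ((ρ sl2H + 1) ^ 2 + 4 * (ρ sl2F * ρ sl2E)
        - ((LinearMap.lTensor (Fin 2 → ℂ) (Finsupp.mapRange.linearMap (P + Q))
            : Module.End ℂ ((Fin 2 → ℂ) ⊗[ℂ] (ℤ →₀ V))) + 2) ^ 2)
      * ((ρ sl2H + 1) ^ 2 + 4 * (ρ sl2F * ρ sl2E)
        - ((LinearMap.lTensor (Fin 2 → ℂ) (Finsupp.mapRange.linearMap (P + Q))
            : Module.End ℂ ((Fin 2 → ℂ) ⊗[ℂ] (ℤ →₀ V)))) ^ 2) = 0 := by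
  have hPQ' : ∀ v : V, P (Q v) = Q (P v) := fun v => LinearMap.congr_fun hPQ.eq v
  have h01 : (Pi.single 0 1 : Fin 2 → ℂ) 1 = 0 := by simp
  have h10 : (Pi.single 1 1 : Fin 2 → ℂ) 0 = 0 := by simp
  have h00 : (Pi.single 0 1 : Fin 2 → ℂ) 0 = 1 := by simp
  have h11 : (Pi.single 1 1 : Fin 2 → ℂ) 1 = 1 := by simp
  have A0 : ∀ (i : ℤ) (v : V),
      (((ρ sl2H + 1) ^ 2 + 4 * (ρ sl2F * ρ sl2E)
        - ((LinearMap.lTensor (Fin 2 → ℂ) (Finsupp.mapRange.linearMap (P + Q))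
            : Module.End ℂ ((Fin 2 → ℂ) ⊗[ℂ] (ℤ →₀ V)))) ^ 2
        : Module.End ℂ ((Fin 2 → ℂ) ⊗[ℂ] (ℤ →₀ V))))
        ((Pi.single 0 1 : Fin 2 → ℂ) ⊗ₜ[ℂ] Finsupp.single i v)
      = (4:ℂ) • ((Pi.single 0 1 : Fin 2 → ℂ) ⊗ₜ[ℂ] Finsupp.single i (Q v + ((i:ℂ)+1) • v))
      + (4:ℂ) • ((Pi.single 1 1 : Fin 2 → ℂ) ⊗ₜ[ℂ] Finsupp.single (i+1) (P v - (i:ℂ) • v)) := by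
    intro i v
    rw [hρ sl2E, hρ sl2F, hρ sl2H]
    simp only [h01, h10, h00, h11, pow_two, Module.End.mul_apply, LinearMap.add_apply,
      LinearMap.sub_apply, Module.End.one_apply, Module.End.ofNat_apply, LinearMap.rTensor_tmul,
      LinearMap.lTensor_tmul, map_add, map_sub, map_smul, map_zero,
      hE, hF, hH, matE, matF, matH,
      zero_tmul, tmul_zero, tmul_add, tmul_sub, add_tmul, sub_tmul,
      tmul_smul, ← smul_tmul', smul_smul,
      Finsupp.mapRange.linearMap_apply, Finsupp.mapRange_single,
      LinearMap.smul_apply, Finsupp.single_add, ← Finsupp.smul_single,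
      Pi.single_eq_same, Pi.single_eq_of_ne, add_sub_cancel_right, sub_add_cancel,
      Finsupp.single_sub, Finsupp.single_neg, smul_add, smul_sub, one_smul, zero_smul,
      map_nsmul, smul_zero, tmul_neg, neg_tmul, hPQ']
    push_cast
    module
  have A1 : ∀ (i : ℤ) (v : V),
      (((ρ sl2H + 1) ^ 2 + 4 * (ρ sl2F * ρ sl2E)
        - ((LinearMap.lTensor (Fin 2 → ℂ) (Finsupp.mapRange.linearMap (P + Q))
            : Module.End ℂ ((Fin 2 → ℂ) ⊗[ℂ] (ℤ →₀ V)))) ^ 2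
        : Module.End ℂ ((Fin 2 → ℂ) ⊗[ℂ] (ℤ →₀ V))))
        ((Pi.single 1 1 : Fin 2 → ℂ) ⊗ₜ[ℂ] Finsupp.single i v)
      = (4:ℂ) • ((Pi.single 1 1 : Fin 2 → ℂ) ⊗ₜ[ℂ] Finsupp.single i (P v - ((i:ℂ)-1) • v))
      + (4:ℂ) • ((Pi.single 0 1 : Fin 2 → ℂ) ⊗ₜ[ℂ] Finsupp.single (i-1) (Q v + (i:ℂ) • v)) := by
    intro i v
    rw [hρ sl2E, hρ sl2F, hρ sl2H]
    simp only [h01, h10, h00, h11, pow_two, Module.End.mul_apply, LinearMap.add_apply,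
      LinearMap.sub_apply, Module.End.one_apply, Module.End.ofNat_apply, LinearMap.rTensor_tmul,
      LinearMap.lTensor_tmul, map_add, map_sub, map_smul, map_zero,
      hE, hF, hH, matE, matF, matH,
      zero_tmul, tmul_zero, tmul_add, tmul_sub, add_tmul, sub_tmul,
      tmul_smul, ← smul_tmul', smul_smul,
      Finsupp.mapRange.linearMap_apply, Finsupp.mapRange_single,
      LinearMap.smul_apply, Finsupp.single_add, ← Finsupp.smul_single,
      Pi.single_eq_same, Pi.single_eq_of_ne, add_sub_cancel_right, sub_add_cancel,
      Finsupp.single_sub, Finsupp.single_neg, smul_add, smul_sub, one_smul, zero_smul,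
      map_nsmul, smul_zero, tmul_neg, neg_tmul, hPQ']
    push_cast
    module
  have B0 : ∀ (i : ℤ) (v : V),
      (((ρ sl2H + 1) ^ 2 + 4 * (ρ sl2F * ρ sl2E)
        - (((LinearMap.lTensor (Fin 2 → ℂ) (Finsupp.mapRange.linearMap (P + Q))
            : Module.End ℂ ((Fin 2 → ℂ) ⊗[ℂ] (ℤ →₀ V)))) + 2) ^ 2
        : Module.End ℂ ((Fin 2 → ℂ) ⊗[ℂ] (ℤ →₀ V))))
        ((Pi.single 0 1 : Fin 2 → ℂ) ⊗ₜ[ℂ] Finsupp.single i v)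
      = (4:ℂ) • ((Pi.single 1 1 : Fin 2 → ℂ) ⊗ₜ[ℂ] Finsupp.single (i+1) (P v - (i:ℂ) • v))
      - (4:ℂ) • ((Pi.single 0 1 : Fin 2 → ℂ) ⊗ₜ[ℂ] Finsupp.single i (P v - (i:ℂ) • v)) := by
    intro i v
    rw [hρ sl2E, hρ sl2F, hρ sl2H]
    simp only [h01, h10, h00, h11, pow_two, Module.End.mul_apply, LinearMap.add_apply,
      LinearMap.sub_apply, Module.End.one_apply, Module.End.ofNat_apply, LinearMap.rTensor_tmul,
      LinearMap.lTensor_tmul, map_add, map_sub, map_smul, map_zero,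
      hE, hF, hH, matE, matF, matH,
      zero_tmul, tmul_zero, tmul_add, tmul_sub, add_tmul, sub_tmul,
      tmul_smul, ← smul_tmul', smul_smul,
      Finsupp.mapRange.linearMap_apply, Finsupp.mapRange_single,
      LinearMap.smul_apply, Finsupp.single_add, ← Finsupp.smul_single,
      Pi.single_eq_same, Pi.single_eq_of_ne, add_sub_cancel_right, sub_add_cancel,
      Finsupp.single_sub, Finsupp.single_neg, smul_add, smul_sub, one_smul, zero_smul,
      map_nsmul, smul_zero, tmul_neg, neg_tmul, hPQ']
    push_cast
    module
  have B1 : ∀ (i : ℤ) (v : V),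
      (((ρ sl2H + 1) ^ 2 + 4 * (ρ sl2F * ρ sl2E)
        - (((LinearMap.lTensor (Fin 2 → ℂ) (Finsupp.mapRange.linearMap (P + Q))
            : Module.End ℂ ((Fin 2 → ℂ) ⊗[ℂ] (ℤ →₀ V)))) + 2) ^ 2
        : Module.End ℂ ((Fin 2 → ℂ) ⊗[ℂ] (ℤ →₀ V))))
        ((Pi.single 1 1 : Fin 2 → ℂ) ⊗ₜ[ℂ] Finsupp.single i v)
      = (4:ℂ) • ((Pi.single 0 1 : Fin 2 → ℂ) ⊗ₜ[ℂ] Finsupp.single (i-1) (Q v + (i:ℂ) • v))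
      - (4:ℂ) • ((Pi.single 1 1 : Fin 2 → ℂ) ⊗ₜ[ℂ] Finsupp.single i (Q v + (i:ℂ) • v)) := by
    intro i v
    rw [hρ sl2E, hρ sl2F, hρ sl2H]
    simp only [h01, h10, h00, h11, pow_two, Module.End.mul_apply, LinearMap.add_apply,
      LinearMap.sub_apply, Module.End.one_apply, Module.End.ofNat_apply, LinearMap.rTensor_tmul,
      LinearMap.lTensor_tmul, map_add, map_sub, map_smul, map_zero,
      hE, hF, hH, matE, matF, matH,
      zero_tmul, tmul_zero, tmul_add, tmul_sub, add_tmul, sub_tmul,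
      tmul_smul, ← smul_tmul', smul_smul,
      Finsupp.mapRange.linearMap_apply, Finsupp.mapRange_single,
      LinearMap.smul_apply, Finsupp.single_add, ← Finsupp.smul_single,
      Pi.single_eq_same, Pi.single_eq_of_ne, add_sub_cancel_right, sub_add_cancel,
      Finsupp.single_sub, Finsupp.single_neg, smul_add, smul_sub, one_smul, zero_smul,
      map_nsmul, smul_zero, tmul_neg, neg_tmul, hPQ']
    push_cast
    module
  refine TensorProduct.ext' fun x y => ?_
  simp only [LinearMap.zero_apply]
  induction y using Finsupp.induction_linear with
  | zero => rw [tmul_zero, map_zero]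
  | add f g hf hg => rw [tmul_add, map_add, hf, hg, add_zero]
  | single i v =>
    have hx : x = x 0 • (Pi.single 0 1 : Fin 2 → ℂ) + x 1 • (Pi.single 1 1 : Fin 2 → ℂ) := by
      funext j; fin_cases j <;> simp
    rw [Module.End.mul_apply, hx, add_tmul, ← smul_tmul', ← smul_tmul', map_add, map_smul, map_smul,
      A0, A1]
    simp only [map_add, map_smul, B0, B1]
    simp only [map_add, map_smul, map_sub, smul_add, smul_sub, smul_smul, hPQ',
      Finsupp.single_add, Finsupp.single_sub, ← Finsupp.smul_single, tmul_add, tmul_sub,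
      tmul_smul, ← smul_tmul', add_sub_cancel_right, sub_add_cancel]
    push_cast
    module
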